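/- arXiv:2106.06926 — 2 statements merged into one kernel-verified Lean document; each statement's English description precedes it below -/
import Mathlib

section
/- (Telescoping/simulation identity) For any policy π and any bounded function f: S×A→ℝ, f(s_0,π) − J(π) = (1/(1−γ)) E_{(s,a)∼d_π}[f(s,a) − (T^π f)(s,a)], where d_π is the normalized discounted state-action occupancy of π started from s_0. -/
open Finset

/-- Distribution of the state-action pair at time `t` under policy `π` started at `s0`. -/
def stepDist {S A : Type*} [Fintype S] [Fintype A] [DecidableEq S]
    (P : S → A → S → ℝ) (π : S → A → ℝ) (s0 : S) : ℕ → S × A → ℝ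
  | 0 => fun p => (if p.1 = s0 then (1 : ℝ) else 0) * π p.1 p.2
  | (t + 1) => fun p => ∑ q : S × A, stepDist P π s0 t q * P q.1 q.2 p.1 * π p.1 p.2

/-!
Writing `w p = ∑ₜ γ^t Pr(sₜ, aₜ = p)` for the unnormalized discounted occupancy, one step of the
chain shows that `w` satisfies the flow equation `⟨w, g⟩ = g(s₀, π) + γ ⟨w, P^π g⟩`. Applied to
`g = f` this says `⟨w, f - γ P^π f⟩ = f(s₀, π)`, while `⟨w, R⟩ = J(π)` by exchanging the finite sum
with the series. Since `d_π = (1 - γ) w`, the identity follows.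
-/

/-- The operator `P^π` with `T^π f = R + γ P^π f`. -/
def policyTransition {S A : Type*} [Fintype S] [Fintype A]
    (P : S → A → S → ℝ) (π : S → A → ℝ) (g : S → A → ℝ) (s : S) (a : A) : ℝ :=
  ∑ s', P s a s' * ∑ a', π s' a' * g s' a'

/-- Unnormalized: `d_π = (1 - γ) • discountedVisits P π s0 γ`. -/
noncomputable def discountedVisits {S A : Type*} [Fintype S] [Fintype A] [DecidableEq S]
    (P : S → A → S → ℝ) (π : S → A → ℝ) (s0 : S) (γ : ℝ) (p : S × A) : ℝ :=
  ∑' t : ℕ, γ ^ t * stepDist P π s0 t p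

section StepDist

variable {S A : Type*} [Fintype S] [Fintype A] [DecidableEq S]
  (P : S → A → S → ℝ) (π : S → A → ℝ) (s0 : S)

theorem sum_stepDist_zero_mul (g : S → A → ℝ) :
    ∑ p : S × A, stepDist P π s0 0 p * g p.1 p.2 = ∑ a, π s0 a * g s0 a := by
  simp [stepDist, Fintype.sum_prod_type, ite_mul]

theorem sum_stepDist_succ_mul (g : S → A → ℝ) (t : ℕ) :
    ∑ p : S × A, stepDist P π s0 (t + 1) p * g p.1 p.2
      = ∑ p : S × A, stepDist P π s0 t p * policyTransition P π g p.1 p.2 := by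
  simp only [stepDist, policyTransition, sum_mul, mul_sum]
  rw [sum_comm]
  refine sum_congr rfl fun q _ => ?_
  rw [Fintype.sum_prod_type]
  exact sum_congr rfl fun s' _ => sum_congr rfl fun a' _ => by ring

theorem stepDist_nonneg (hP0 : ∀ s a s', 0 ≤ P s a s') (hπ0 : ∀ s a, 0 ≤ π s a) :
    ∀ t p, 0 ≤ stepDist P π s0 t p
  | 0, p => mul_nonneg (by split_ifs <;> norm_num) (hπ0 _ _)
  | t + 1, p => sum_nonneg fun q _ =>
      mul_nonneg (mul_nonneg (stepDist_nonneg hP0 hπ0 t q) (hP0 _ _ _)) (hπ0 _ _)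

theorem sum_stepDist_eq_one (hP1 : ∀ s a, ∑ s', P s a s' = 1) (hπ1 : ∀ s, ∑ a, π s a = 1)
    (t : ℕ) : ∑ p : S × A, stepDist P π s0 t p = 1 := by
  have hone : policyTransition P π (fun _ _ => 1) = fun _ _ => 1 := by
    ext s a
    simp [policyTransition, hP1, hπ1]
  induction t with
  | zero => simpa [hπ1] using sum_stepDist_zero_mul P π s0 (fun _ _ => 1)
  | succ t ih => simpa [hone, ih] using sum_stepDist_succ_mul P π s0 (fun _ _ => 1) t

theorem stepDist_le_one (hP0 : ∀ s a s', 0 ≤ P s a s') (hP1 : ∀ s a, ∑ s', P s a s' = 1)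
    (hπ0 : ∀ s a, 0 ≤ π s a) (hπ1 : ∀ s, ∑ a, π s a = 1) (t : ℕ) (p : S × A) :
    stepDist P π s0 t p ≤ 1 :=
  sum_stepDist_eq_one P π s0 hP1 hπ1 t ▸
    single_le_sum (fun q _ => stepDist_nonneg P π s0 hP0 hπ0 t q) (mem_univ p)

end StepDist

section DiscountedVisits

variable {S A : Type*} [Fintype S] [Fintype A] [DecidableEq S]
  {P : S → A → S → ℝ} {π : S → A → ℝ} (s0 : S) {γ : ℝ}
  (hP0 : ∀ s a s', 0 ≤ P s a s') (hP1 : ∀ s a, ∑ s', P s a s' = 1)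
  (hπ0 : ∀ s a, 0 ≤ π s a) (hπ1 : ∀ s, ∑ a, π s a = 1) (hγ0 : 0 ≤ γ) (hγ1 : γ < 1)
include hP0 hP1 hπ0 hπ1 hγ0 hγ1

theorem summable_geometric_mul_stepDist (p : S × A) :
    Summable fun t => γ ^ t * stepDist P π s0 t p := by
  refine (summable_geometric_of_lt_one hγ0 hγ1).of_nonneg_of_le
    (fun t => mul_nonneg (pow_nonneg hγ0 t) (stepDist_nonneg P π s0 hP0 hπ0 t p)) fun t => ?_
  simpa using mul_le_mul_of_nonneg_left (stepDist_le_one P π s0 hP0 hP1 hπ0 hπ1 t p)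
    (pow_nonneg hγ0 t)

theorem summable_geometric_mul_sum_stepDist_mul (g : S × A → ℝ) :
    Summable fun t => γ ^ t * ∑ p : S × A, stepDist P π s0 t p * g p := by
  simp only [mul_sum, ← mul_assoc]
  exact summable_sum fun p _ =>
    (summable_geometric_mul_stepDist s0 hP0 hP1 hπ0 hπ1 hγ0 hγ1 p).mul_right (g p)

theorem tsum_geometric_mul_sum_stepDist_mul (g : S × A → ℝ) :
    ∑' t, γ ^ t * ∑ p : S × A, stepDist P π s0 t p * g p
      = ∑ p : S × A, discountedVisits P π s0 γ p * g p := by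
  simp only [discountedVisits, mul_sum, ← mul_assoc]
  rw [Summable.tsum_finsetSum fun p _ =>
    (summable_geometric_mul_stepDist s0 hP0 hP1 hπ0 hπ1 hγ0 hγ1 p).mul_right (g p)]
  exact sum_congr rfl fun p _ => tsum_mul_right

theorem sum_discountedVisits_mul_sub_policyTransition (g : S → A → ℝ) :
    ∑ p : S × A, discountedVisits P π s0 γ p * g p.1 p.2
        - γ * ∑ p : S × A, discountedVisits P π s0 γ p * policyTransition P π g p.1 p.2
      = ∑ a, π s0 a * g s0 a := by
  have hsum := summable_geometric_mul_sum_stepDist_mul s0 hP0 hP1 hπ0 hπ1 hγ0 hγ1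
    fun p => g p.1 p.2
  rw [← tsum_geometric_mul_sum_stepDist_mul s0 hP0 hP1 hπ0 hπ1 hγ0 hγ1,
    ← tsum_geometric_mul_sum_stepDist_mul s0 hP0 hP1 hπ0 hπ1 hγ0 hγ1, hsum.tsum_eq_zero_add,
    ← tsum_mul_left]
  simp only [sum_stepDist_succ_mul, sum_stepDist_zero_mul, pow_succ', pow_zero, one_mul, mul_assoc]
  exact add_sub_cancel_right _ _

end DiscountedVisits

theorem telescoping_identity_general
    {S A : Type*} [Fintype S] [Fintype A] [DecidableEq S]
    (P : S → A → S → ℝ) (hP0 : ∀ s a s', 0 ≤ P s a s') (hP1 : ∀ s a, ∑ s', P s a s' = 1)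
    (R : S → A → ℝ)
    (γ : ℝ) (hγ0 : 0 ≤ γ) (hγ1 : γ < 1) (s0 : S)
    (π : S → A → ℝ) (hπ0 : ∀ s a, 0 ≤ π s a) (hπ1 : ∀ s, ∑ a, π s a = 1)
    (f : S → A → ℝ)
    (J : ℝ) (hJ : J = ∑' t : ℕ, γ ^ t * ∑ p : S × A, stepDist P π s0 t p * R p.1 p.2)
    (dπ : S × A → ℝ)
    (hd : ∀ p, dπ p = (1 - γ) * ∑' t : ℕ, γ ^ t * stepDist P π s0 t p) :
    (∑ a, π s0 a * f s0 a) - J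
      = (1 / (1 - γ)) * ∑ p : S × A, dπ p *
          (f p.1 p.2 - (R p.1 p.2 + γ * ∑ s', P p.1 p.2 s' * ∑ a', π s' a' * f s' a')) := by
  set w := discountedVisits P π s0 γ
  have hJw : J = ∑ p : S × A, w p * R p.1 p.2 :=
    hJ.trans (tsum_geometric_mul_sum_stepDist_mul s0 hP0 hP1 hπ0 hπ1 hγ0 hγ1 _)
  have hdw : ∀ p, dπ p = (1 - γ) * w p := hd
  have hγ : (1 : ℝ) - γ ≠ 0 := by linarith
  rw [← sum_discountedVisits_mul_sub_policyTransition s0 hP0 hP1 hπ0 hπ1 hγ0 hγ1 f, hJw,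
    mul_sum, mul_sum, ← sum_sub_distrib, ← sum_sub_distrib]
  refine sum_congr rfl fun p _ => ?_
  change _ = _ * (dπ p * (_ - (_ + γ * policyTransition P π f p.1 p.2)))
  rw [hdw]
  field_simp
  ring

/-- Telescoping/simulation identity:
`f(s0,π) − J(π) = (1/(1−γ)) E_{(s,a)∼d_π}[f(s,a) − (T^π f)(s,a)]`, where `d_π` is the
normalized discounted state-action occupancy of `π` started at `s0`. -/
theorem telescoping_identity
    {S A : Type*} [Fintype S] [Fintype A] [DecidableEq S]
    (P : S → A → S → ℝ) (hP0 : ∀ s a s', 0 ≤ P s a s') (hP1 : ∀ s a, ∑ s', P s a s' = 1)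
    (R : S → A → ℝ) (Rmax : ℝ) (hR : ∀ s a, R s a ∈ Set.Icc (0 : ℝ) Rmax)
    (γ : ℝ) (hγ0 : 0 ≤ γ) (hγ1 : γ < 1) (s0 : S)
    (π : S → A → ℝ) (hπ0 : ∀ s a, 0 ≤ π s a) (hπ1 : ∀ s, ∑ a, π s a = 1)
    (f : S → A → ℝ) (B : ℝ) (hf : ∀ s a, |f s a| ≤ B)
    (J : ℝ) (hJ : J = ∑' t : ℕ, γ ^ t * ∑ p : S × A, stepDist P π s0 t p * R p.1 p.2)
    (dπ : S × A → ℝ)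
    (hd : ∀ p, dπ p = (1 - γ) * ∑' t : ℕ, γ ^ t * stepDist P π s0 t p) :
    (∑ a, π s0 a * f s0 a) - J
      = (1 / (1 - γ)) * ∑ p : S × A, dπ p *
          (f p.1 p.2 - (R p.1 p.2 + γ * ∑ s', P p.1 p.2 s' * ∑ a', π s' a' * f s' a')) :=
  telescoping_identity_general P hP0 hP1 R γ hγ0 hγ1 s0 π hπ0 hπ1 f J hJ dπ hd
end

section
/- (Regret of entropy-regularized mirror ascent / exponential weights) Let A be a finite set, f_1,…,f_T: A→[−V_max, V_max], p_1 the uniform distribution on A, and p_{t+1}(a) ∝ p_t(a) exp(η f_t(a)). If η = sqrt(log|A| / (2 V_max² T)), then for every p ∈ Δ(A), Σ_{t=1}^{T} ⟨p − p_t, f_t⟩ ≤ 2 V_max sqrt(2 T log|A|). -/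
open Finset

lemma mgf_bound {A : Type*} [Fintype A] [Nonempty A] (p x : A → ℝ)
    (hp0 : ∀ a, 0 ≤ p a) (hp1 : ∑ a, p a = 1) (c s : ℝ) (hx : ∀ a, |x a| ≤ c) :
    ∑ a, p a * Real.exp (s * x a)
      ≤ Real.exp (s * (∑ a, p a * x a) + 2 * s ^ 2 * c ^ 2) := by
  have hc : 0 ≤ c := le_trans (abs_nonneg _) (hx (Classical.arbitrary A))
  rcases eq_or_lt_of_le hc with hc0 | hcpos
  · have hx0 : ∀ a, x a = 0 := fun a => abs_eq_zero.mp (le_antisymm (hc0 ▸ hx a) (abs_nonneg _))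
    simp [hx0, hp1, ← hc0]
  set m := ∑ a, p a * x a with hm_def
  have hm : |m| ≤ c := by
    calc |m| ≤ ∑ a, |p a * x a| := Finset.abs_sum_le_sum_abs _ _
    _ ≤ ∑ a, p a * c := by
        apply Finset.sum_le_sum; intro a _
        rw [abs_mul, abs_of_nonneg (hp0 a)]
        exact mul_le_mul_of_nonneg_left (hx a) (hp0 a)
    _ = c := by rw [← Finset.sum_mul, hp1, one_mul]
  set b := 2 * c with hb_def
  have hb : 0 < b := by positivity
  have hy : ∀ a, |x a - m| ≤ b := by
    intro a
    calc |x a - m| ≤ |x a| + |m| := abs_sub _ _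
    _ ≤ c + c := add_le_add (hx a) hm
    _ = b := by rw [hb_def]; ring
  have step : ∀ a, Real.exp (s * (x a - m))
      ≤ ((b - (x a - m)) / (2 * b)) * Real.exp (-(s * b))
        + ((b + (x a - m)) / (2 * b)) * Real.exp (s * b) := by
    intro a
    obtain ⟨hy1, hy2⟩ := abs_le.mp (hy a)
    have h1 : (0:ℝ) ≤ (b - (x a - m)) / (2 * b) := by
      apply div_nonneg (by linarith) (by linarith)
    have h2 : (0:ℝ) ≤ (b + (x a - m)) / (2 * b) := by
      apply div_nonneg (by linarith) (by linarith)
    have h3 : (b - (x a - m)) / (2 * b) + (b + (x a - m)) / (2 * b) = 1 := by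
      field_simp
      ring
    have := convexOn_exp.2 (Set.mem_univ (-(s * b))) (Set.mem_univ (s * b)) h1 h2 h3
    simp only [smul_eq_mul] at this
    have harg : (b - (x a - m)) / (2 * b) * -(s * b) + (b + (x a - m)) / (2 * b) * (s * b)
        = s * (x a - m) := by field_simp; ring
    rwa [harg] at this
  have hsum : ∑ a, (p a * (((b - (x a - m)) / (2 * b)) * Real.exp (-(s * b))
      + ((b + (x a - m)) / (2 * b)) * Real.exp (s * b))) = Real.cosh (s * b) := by
    have e0 : ∑ a, p a * (x a - m) = 0 := by
      simp only [mul_sub]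
      rw [Finset.sum_sub_distrib, ← Finset.sum_mul, hp1, one_mul]
      exact sub_self _
    have e1 : ∀ a, p a * (((b - (x a - m)) / (2 * b)) * Real.exp (-(s * b))
        + ((b + (x a - m)) / (2 * b)) * Real.exp (s * b))
        = (Real.exp (-(s * b)) / (2 * b)) * (p a * b - p a * (x a - m))
          + (Real.exp (s * b) / (2 * b)) * (p a * b + p a * (x a - m)) := by
      intro a; field_simp
    rw [Finset.sum_congr rfl fun a _ => e1 a, Finset.sum_add_distrib, ← Finset.mul_sum,
      ← Finset.mul_sum, Finset.sum_sub_distrib, Finset.sum_add_distrib, e0,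
      ← Finset.sum_mul, hp1, Real.cosh_eq]
    field_simp
    ring
  have hcosh : Real.cosh (s * b) ≤ Real.exp (2 * s ^ 2 * c ^ 2) := by
    have := Real.cosh_le_exp_half_sq (s * b)
    have e : (s * b) ^ 2 / 2 = 2 * s ^ 2 * c ^ 2 := by rw [hb_def]; ring
    rwa [e] at this
  calc ∑ a, p a * Real.exp (s * x a)
      = Real.exp (s * m) * ∑ a, p a * Real.exp (s * (x a - m)) := by
        rw [Finset.mul_sum]
        apply Finset.sum_congr rfl
        intro a _
        rw [← mul_assoc, mul_comm (Real.exp (s * m)) (p a), mul_assoc, ← Real.exp_add]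
        ring_nf
    _ ≤ Real.exp (s * m) * Real.exp (2 * s ^ 2 * c ^ 2) := by
        apply mul_le_mul_of_nonneg_left _ (Real.exp_pos _).le
        calc ∑ a, p a * Real.exp (s * (x a - m))
            ≤ ∑ a, (p a * (((b - (x a - m)) / (2 * b)) * Real.exp (-(s * b))
              + ((b + (x a - m)) / (2 * b)) * Real.exp (s * b))) := by
              apply Finset.sum_le_sum; intro a _
              exact mul_le_mul_of_nonneg_left (step a) (hp0 a)
          _ = Real.cosh (s * b) := hsum
          _ ≤ Real.exp (2 * s ^ 2 * c ^ 2) := hcosh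
    _ = Real.exp (s * m + 2 * s ^ 2 * c ^ 2) := (Real.exp_add _ _).symm

lemma telescope (g : ℕ → ℝ) (T : ℕ) :
    ∑ t ∈ Icc 1 T, (g (t + 1) - g t) = g (T + 1) - g 1 := by
  induction T with
  | zero => simp
  | succ n ih =>
      rw [Finset.sum_Icc_succ_top (by omega : 1 ≤ n + 1), ih]
      ring

/-- Regret of entropy-regularized mirror ascent (exponential weights): starting from the
uniform distribution and updating `p (t+1) a ∝ p t a * exp (η * f t a)` with
`η = √(log |A| / (2 V_max² T))`, the regret against any fixed distribution `q` on `A` is at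
most `2 V_max √(2 T log |A|)`. -/
theorem exp_weights_regret {A : Type*} [Fintype A] [Nonempty A]
    (T : ℕ) (Vmax : ℝ) (f : ℕ → A → ℝ)
    (hf : ∀ t ∈ Icc 1 T, ∀ a, f t a ∈ Set.Icc (-Vmax) Vmax)
    (η : ℝ) (hη : η = Real.sqrt (Real.log (Fintype.card A) / (2 * Vmax ^ 2 * T)))
    (p : ℕ → A → ℝ)
    (hp1 : ∀ a, p 1 a = 1 / (Fintype.card A : ℝ))
    (hupd : ∀ t ∈ Icc 1 T, ∀ a,
      p (t + 1) a = p t a * Real.exp (η * f t a) / ∑ a', p t a' * Real.exp (η * f t a'))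
    (q : A → ℝ) (hq0 : ∀ a, 0 ≤ q a) (hq1 : ∑ a, q a = 1) :
    ∑ t ∈ Icc 1 T, ∑ a, (q a - p t a) * f t a
      ≤ 2 * Vmax * Real.sqrt (2 * T * Real.log (Fintype.card A)) := by
  set L : ℝ := Real.log (Fintype.card A) with hL_def
  have hcardpos : (0:ℝ) < (Fintype.card A : ℝ) := by exact_mod_cast Fintype.card_pos
  have hn1 : (1:ℝ) ≤ (Fintype.card A : ℝ) := by exact_mod_cast Fintype.card_pos
  have hL0 : 0 ≤ L := Real.log_nonneg hn1
  -- trivial case T = 0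
  rcases Nat.eq_zero_or_pos T with hT0 | hT1
  · subst hT0
    simp
  have hTpos : (0:ℝ) < (T:ℝ) := by exact_mod_cast hT1
  have h1T : (1:ℕ) ∈ Icc 1 T := by simp only [mem_Icc]; omega
  have hV0 : 0 ≤ Vmax := by
    obtain ⟨h1, h2⟩ := hf 1 h1T (Classical.arbitrary A)
    linarith
  -- the distributions p t are positive and normalized for t ∈ [1, T+1]
  have hP : ∀ t, 1 ≤ t → t ≤ T + 1 → (∀ a, 0 < p t a) ∧ (∑ a, p t a) = 1 := by
    intro t ht1
    induction t, ht1 using Nat.le_induction with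
    | base =>
      intro _
      refine ⟨fun a => by rw [hp1]; positivity, ?_⟩
      simp only [hp1, Finset.sum_const, card_univ, nsmul_eq_mul]
      field_simp
    | succ t ht ih =>
      intro hle
      obtain ⟨hpos, hsum⟩ := ih (by omega)
      have htT : t ∈ Icc 1 T := by simp only [mem_Icc]; omega
      have hZ : 0 < ∑ a', p t a' * Real.exp (η * f t a') :=
        Finset.sum_pos (fun a _ => mul_pos (hpos a) (Real.exp_pos _)) univ_nonempty
      constructor
      · intro a
        rw [hupd t htT a]
        exact div_pos (mul_pos (hpos a) (Real.exp_pos _)) hZ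
      · rw [Finset.sum_congr rfl fun a _ => hupd t htT a, ← Finset.sum_div,
          div_self hZ.ne']
  -- case |A| = 1
  rcases eq_or_lt_of_le hn1 with hn1' | hn2
  · obtain ⟨a0, ha0⟩ := Fintype.card_eq_one_iff.mp (by exact_mod_cast hn1'.symm)
    have hL1 : L = 0 := by rw [hL_def, ← hn1', Real.log_one]
    have hzero : ∀ t ∈ Icc 1 T, ∑ a, (q a - p t a) * f t a = 0 := by
      intro t ht
      obtain ⟨ht1, ht2⟩ := mem_Icc.mp ht
      have hsingle : ∀ (g : A → ℝ), ∑ a, g a = g a0 := by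
        intro g
        apply Finset.sum_eq_single_of_mem a0 (mem_univ _)
        intro b _ hb; exact absurd (ha0 b) hb
      have hq : q a0 = 1 := by rw [← hq1, hsingle]
      have hp : p t a0 = 1 := by rw [← (hP t ht1 (by omega)).2, hsingle]
      rw [hsingle, hq, hp, sub_self, zero_mul]
    rw [Finset.sum_congr rfl hzero, Finset.sum_const, smul_zero, hL1]
    positivity
  -- case Vmax = 0
  rcases eq_or_lt_of_le hV0 with hV0' | hVpos
  · have hzero : ∀ t ∈ Icc 1 T, ∑ a, (q a - p t a) * f t a = 0 := by
      intro t ht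
      apply Finset.sum_eq_zero
      intro a _
      obtain ⟨h1, h2⟩ := hf t ht a
      have : f t a = 0 := le_antisymm (hV0' ▸ h2) (by rw [← hV0'] at h1; linarith)
      rw [this, mul_zero]
    rw [Finset.sum_congr rfl hzero, Finset.sum_const, smul_zero, ← hV0']
    positivity
  -- main case
  have hLpos : 0 < L := Real.log_pos hn2
  have hηpos : 0 < η := by
    rw [hη]
    exact Real.sqrt_pos.mpr (div_pos hLpos (by positivity))
  have hη2 : η ^ 2 = L / (2 * Vmax ^ 2 * T) := by
    rw [hη, Real.sq_sqrt (le_of_lt (div_pos hLpos (by positivity)))]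
  set Z : ℕ → ℝ := fun t => ∑ a', p t a' * Real.exp (η * f t a') with hZ_def
  have hZpos : ∀ t ∈ Icc 1 T, 0 < Z t := by
    intro t ht
    obtain ⟨ht1, ht2⟩ := mem_Icc.mp ht
    exact Finset.sum_pos (fun a _ => mul_pos ((hP t ht1 (by omega)).1 a) (Real.exp_pos _))
      univ_nonempty
  -- telescoping per coordinate
  have key1 : ∀ a, ∑ t ∈ Icc 1 T, (η * f t a - Real.log (Z t))
      = Real.log (p (T + 1) a) - Real.log (p 1 a) := by
    intro a
    have hlog : ∀ t ∈ Icc 1 T,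
        η * f t a - Real.log (Z t) = Real.log (p (t + 1) a) - Real.log (p t a) := by
      intro t ht
      obtain ⟨ht1, ht2⟩ := mem_Icc.mp ht
      have hpa : p t a ≠ 0 := ((hP t ht1 (by omega)).1 a).ne'
      rw [hupd t ht a, Real.log_div (mul_ne_zero hpa (Real.exp_ne_zero _)) (hZpos t ht).ne',
        Real.log_mul hpa (Real.exp_ne_zero _), Real.log_exp]
      ring
    rw [Finset.sum_congr rfl hlog]
    exact telescope (fun t => Real.log (p t a)) T
  -- mgf bound per step
  have key4 : ∀ t ∈ Icc 1 T,
      Real.log (Z t) ≤ η * (∑ a, p t a * f t a) + 2 * η ^ 2 * Vmax ^ 2 := by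
    intro t ht
    obtain ⟨ht1, ht2⟩ := mem_Icc.mp ht
    obtain ⟨hpos, hsum⟩ := hP t ht1 (by omega)
    have hx : ∀ a, |f t a| ≤ Vmax := by
      intro a
      obtain ⟨h1, h2⟩ := hf t ht a
      exact abs_le.mpr ⟨h1, h2⟩
    have := mgf_bound (p t) (f t) (fun a => (hpos a).le) hsum Vmax η hx
    calc Real.log (Z t) ≤ Real.log (Real.exp (η * (∑ a, p t a * f t a) + 2 * η ^ 2 * Vmax ^ 2)) :=
          Real.log_le_log (hZpos t ht) this
      _ = η * (∑ a, p t a * f t a) + 2 * η ^ 2 * Vmax ^ 2 := Real.log_exp _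
  -- combine
  set S := ∑ t ∈ Icc 1 T, ∑ a, (q a - p t a) * f t a with hS_def
  set QF := ∑ t ∈ Icc 1 T, ∑ a, q a * f t a with hQF_def
  set PF := ∑ t ∈ Icc 1 T, ∑ a, p t a * f t a with hPF_def
  set LZ := ∑ t ∈ Icc 1 T, Real.log (Z t) with hLZ_def
  have hSplit : S = QF - PF := by
    rw [hS_def, hQF_def, hPF_def, ← Finset.sum_sub_distrib]
    apply Finset.sum_congr rfl
    intro t _
    rw [← Finset.sum_sub_distrib]
    apply Finset.sum_congr rfl
    intro a _
    ring
  have hA : η * QF - LZ ≤ L := by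
    have e1 : η * QF - LZ = ∑ a, q a * (∑ t ∈ Icc 1 T, (η * f t a - Real.log (Z t))) := by
      have : ∀ a, q a * (∑ t ∈ Icc 1 T, (η * f t a - Real.log (Z t)))
          = (∑ t ∈ Icc 1 T, η * (q a * f t a)) - q a * LZ := by
        intro a
        rw [Finset.sum_sub_distrib, mul_sub, Finset.mul_sum, hLZ_def, Finset.mul_sum]
        congr 1
        · apply Finset.sum_congr rfl; intro t _; ring
      rw [Finset.sum_congr rfl fun a _ => this a, Finset.sum_sub_distrib,
        ← Finset.sum_mul, hq1, one_mul]
      congr 1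
      rw [Finset.sum_comm, hQF_def, Finset.mul_sum]
      apply Finset.sum_congr rfl
      intro t _
      rw [Finset.mul_sum]
    rw [e1, Finset.sum_congr rfl fun a _ => by rw [key1 a]]
    have e2 : ∀ a, q a * (Real.log (p (T + 1) a) - Real.log (p 1 a))
        = q a * Real.log (p (T + 1) a) + q a * L := by
      intro a
      rw [hp1, one_div, Real.log_inv]
      ring
    rw [Finset.sum_congr rfl fun a _ => e2 a, Finset.sum_add_distrib, ← Finset.sum_mul, hq1,
      one_mul]
    have e3 : ∑ a, q a * Real.log (p (T + 1) a) ≤ 0 := by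
      apply Finset.sum_nonpos
      intro a _
      apply mul_nonpos_of_nonneg_of_nonpos (hq0 a)
      apply Real.log_nonpos ((hP (T + 1) (by omega) le_rfl).1 a).le
      calc p (T + 1) a ≤ ∑ a', p (T + 1) a' :=
            Finset.single_le_sum (fun a' _ => ((hP (T + 1) (by omega) le_rfl).1 a').le)
              (mem_univ a)
        _ = 1 := (hP (T + 1) (by omega) le_rfl).2
    linarith
  have hB : LZ ≤ η * PF + 2 * η ^ 2 * Vmax ^ 2 * T := by
    calc LZ ≤ ∑ t ∈ Icc 1 T, (η * (∑ a, p t a * f t a) + 2 * η ^ 2 * Vmax ^ 2) :=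
          Finset.sum_le_sum key4
      _ = η * PF + 2 * η ^ 2 * Vmax ^ 2 * T := by
          rw [Finset.sum_add_distrib, ← Finset.mul_sum, Finset.sum_const, Nat.card_Icc,
            Nat.add_sub_cancel, nsmul_eq_mul, hPF_def]
          ring
  have hMain : η * S ≤ L + 2 * η ^ 2 * Vmax ^ 2 * T := by
    rw [hSplit]
    have : η * (QF - PF) = (η * QF - LZ) + (LZ - η * PF) := by ring
    rw [this]
    linarith
  -- final arithmetic
  have h2 : 2 * η ^ 2 * Vmax ^ 2 * T = L := by
    rw [hη2]
    field_simp
  have hR : η * (2 * Vmax * Real.sqrt (2 * T * L)) = 2 * L := by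
    have hs : η * Real.sqrt (2 * T * L) = L / Vmax := by
      rw [hη, ← Real.sqrt_mul (le_of_lt (div_pos hLpos (by positivity)))]
      have : L / (2 * Vmax ^ 2 * T) * (2 * T * L) = (L / Vmax) ^ 2 := by
        field_simp
      rw [this, Real.sqrt_sq (by positivity)]
    calc η * (2 * Vmax * Real.sqrt (2 * T * L))
        = 2 * Vmax * (η * Real.sqrt (2 * T * L)) := by ring
      _ = 2 * Vmax * (L / Vmax) := by rw [hs]
      _ = 2 * L := by field_simp
  have : η * S ≤ η * (2 * Vmax * Real.sqrt (2 * T * L)) := by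
    rw [hR]
    linarith [hMain, h2]
  exact le_of_mul_le_mul_left this hηpos
end
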